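/- Let K be a field and let σ ∈ GL_3(K) be noncentral. Then the following are equivalent: (i) the characteristic polynomial of σ has a root in K; (ii) there exist ρ, τ ∈ GL_3(K) such that t_{12}(1) = (ρ⁻¹σρ)·(τ⁻¹σ⁻¹τ); (iii) there exist ρ, τ ∈ GL_3(K) such that t_{12}(1) = (ρ⁻¹σ⁻¹ρ)·(τ⁻¹στ). -/

import Mathlib

/-!
(ii) and (iii) are equivalent because `X * Y = (X * Y * X⁻¹) * X`.

If `χ_σ(a) = 0`, conjugate `σ` so that `e₀` is an eigenvector for `a`. Conjugating once more by a
suitable elementary transvection `g` gives `g⁻¹ σ g = σ + e₀ wᵀ = σ u` with `w₀ = 0`, `w ≠ 0`, so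
`u = 1 + a⁻¹ e₀ wᵀ = σ⁻¹ (g⁻¹ σ g)` is a nontrivial transvection, and all of these are conjugate
to `t₁₂(1)`.

Conversely, `t₁₂(1) = A C⁻¹` with `A`, `C` conjugate to `σ` means `t₁₂(1) C = A`. Comparing the
traces and the traces of the adjugates of both sides (two conjugation invariants) forces
`C 1 0 = 0` and `C 1 2 * C 2 0 = 0` (0-based indices), so `C 1 1` or `C 0 0` is an eigenvalue
of `C`.
-/

open Matrix

section General

variable {n R : Type*} [Fintype n] [DecidableEq n] [CommRing R]

def IsConjMulConj (T A B : Matrix n n R) : Prop :=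
  ∃ ρ τ : Matrix n n R, IsUnit ρ.det ∧ IsUnit τ.det ∧ T = (ρ⁻¹ * A * ρ) * (τ⁻¹ * B * τ)

namespace IsConjMulConj

variable {T T' A B : Matrix n n R}

theorem swap (hA : IsUnit A.det) (h : IsConjMulConj T A B) : IsConjMulConj T B A := by
  obtain ⟨ρ, τ, hρ, hτ, rfl⟩ := h
  have hX : IsUnit (ρ⁻¹ * A * ρ).det := by
    simpa [det_mul, mul_comm] using hρ.mul ((isUnit_nonsing_inv_det ρ hρ).mul hA)
  refine ⟨τ * (ρ⁻¹ * A * ρ)⁻¹, ρ, ?_, hρ, ?_⟩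
  · rw [det_mul]
    exact hτ.mul (isUnit_nonsing_inv_det _ hX)
  · generalize ρ⁻¹ * A * ρ = X at hX ⊢
    rw [Matrix.mul_inv_rev, nonsing_inv_nonsing_inv X hX]
    simp only [Matrix.mul_assoc, nonsing_inv_mul X hX, Matrix.mul_one]

theorem of_semiconj {G : Matrix n n R} (hG : IsUnit G.det) (hGT : G * T = T' * G)
    (h : IsConjMulConj T A B) : IsConjMulConj T' A B := by
  obtain ⟨ρ, τ, hρ, hτ, rfl⟩ := h
  have hT' : T' = G * (ρ⁻¹ * A * ρ * (τ⁻¹ * B * τ)) * G⁻¹ := by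
    rw [hGT, Matrix.mul_assoc, mul_nonsing_inv G hG, Matrix.mul_one]
  have hG' := isUnit_nonsing_inv_det G hG
  refine ⟨ρ * G⁻¹, τ * G⁻¹, by rw [det_mul]; exact hρ.mul hG', by rw [det_mul]; exact hτ.mul hG',
    ?_⟩
  rw [hT', Matrix.mul_inv_rev, Matrix.mul_inv_rev, nonsing_inv_nonsing_inv G hG]
  simp only [Matrix.mul_assoc, nonsing_inv_mul_cancel_left _ _ hG]

theorem of_conj {P Q : Matrix n n R} (hP : IsUnit P.det) (hQ : IsUnit Q.det)
    (h : IsConjMulConj T (P⁻¹ * A * P) (Q⁻¹ * B * Q)) : IsConjMulConj T A B := by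
  obtain ⟨ρ, τ, hρ, hτ, rfl⟩ := h
  refine ⟨P * ρ, Q * τ, by rw [det_mul]; exact hP.mul hρ, by rw [det_mul]; exact hQ.mul hτ, ?_⟩
  simp only [Matrix.mul_inv_rev, Matrix.mul_assoc]

end IsConjMulConj

theorem isConjMulConj_inv_of_semiconj {σ g u : Matrix n n R} (hσ : IsUnit σ.det)
    (hg : IsUnit g.det) (h : σ * g = g * (σ * u)) : IsConjMulConj u σ⁻¹ σ := by
  refine ⟨1, g, by simp, hg, ?_⟩
  simp only [inv_one, Matrix.one_mul, Matrix.mul_one, Matrix.mul_assoc, h,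
    nonsing_inv_mul_cancel_left _ _ hg, nonsing_inv_mul_cancel_left _ _ hσ]

theorem inv_conj_of_isUnit_det {σ P : Matrix n n R} (hP : IsUnit P.det) :
    (P⁻¹ * σ * P)⁻¹ = P⁻¹ * σ⁻¹ * P := by
  rw [Matrix.mul_inv_rev, Matrix.mul_inv_rev, nonsing_inv_nonsing_inv P hP, Matrix.mul_assoc]

theorem trace_conj_of_isUnit_det {σ P : Matrix n n R} (hP : IsUnit P.det) :
    (P⁻¹ * σ * P).trace = σ.trace :=
  trace_units_conj' (nonsingInvUnit P hP) σ

theorem charpoly_conj_of_isUnit_det {σ P : Matrix n n R} (hP : IsUnit P.det) :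
    (P⁻¹ * σ * P).charpoly = σ.charpoly :=
  charpoly_units_conj' (nonsingInvUnit P hP) σ

theorem trace_adjugate_conj_of_isUnit_det {σ P : Matrix n n R} (hP : IsUnit P.det) :
    (P⁻¹ * σ * P).adjugate.trace = σ.adjugate.trace := by
  rw [adjugate_mul_distrib, adjugate_mul_distrib, trace_mul_comm, Matrix.mul_assoc,
    ← adjugate_mul_distrib, mul_nonsing_inv P hP, adjugate_one, Matrix.mul_one]

theorem adjugate_transvection {i j : n} (hij : i ≠ j) (c : R) :
    (Matrix.transvection i j c).adjugate = Matrix.transvection i j (-c) := by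
  calc (Matrix.transvection i j c).adjugate
      = (Matrix.transvection i j c).adjugate *
          (Matrix.transvection i j c * Matrix.transvection i j (-c)) := by
        rw [Matrix.transvection_mul_transvection_same i j hij, add_neg_cancel, transvection_zero,
          Matrix.mul_one]
    _ = Matrix.transvection i j (-c) := by
        rw [← Matrix.mul_assoc, adjugate_mul, Matrix.det_transvection_of_ne i j hij, one_smul,
          Matrix.one_mul]

theorem mul_transvection_eq_of_mulVec_single_eq {σ : Matrix n n R} {k i : n} {a : R}
    (hki : k ≠ i) (hcol : σ *ᵥ Pi.single k 1 = a • Pi.single k 1) :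
    σ * Matrix.transvection k i 1 =
      Matrix.transvection k i 1 * (σ + vecMulVec (Pi.single k 1) (a • Pi.single i 1 - σ i)) := by
  have hcol' (p : n) : σ p k = if p = k then a else 0 := by
    simpa [Pi.single_apply] using congrFun hcol p
  ext p q
  simp [Matrix.mul_apply, Matrix.transvection, Matrix.one_apply, Matrix.single_apply,
    vecMulVec_apply, Pi.single_apply, add_mul, mul_add, Finset.sum_add_distrib, ite_and, hcol',
    hki.symm]
  split_ifs <;> subst_vars <;> simp_all

theorem mul_transvection_eq_of_eq_smul_one_add {σ : Matrix n n R} {k i j : n} {a : R}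
    {r : n → R} (hjk : j ≠ k) (hσ : σ = a • 1 + vecMulVec (Pi.single k 1) r) :
    σ * Matrix.transvection i j 1 =
      Matrix.transvection i j 1 * (σ + vecMulVec (Pi.single k 1) (r i • Pi.single j 1)) := by
  subst hσ
  ext p q
  simp [Matrix.mul_apply, Matrix.transvection, Matrix.one_apply, Matrix.single_apply,
    vecMulVec_apply, Pi.single_apply, add_mul, mul_add, Finset.sum_add_distrib, ite_and, hjk]
  split_ifs <;> subst_vars <;> simp_all
  abel

theorem exists_mulVec_eq_smul_of_isRoot_charpoly {K : Type*} [Field K] {σ : Matrix n n K}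
    {a : K} (ha : σ.charpoly.IsRoot a) : ∃ v ≠ 0, σ *ᵥ v = a • v := by
  rw [Polynomial.IsRoot, eval_charpoly, ← exists_mulVec_eq_zero_iff] at ha
  obtain ⟨v, hv, hav⟩ := ha
  rw [sub_mulVec, sub_eq_zero, eq_comm] at hav
  exact ⟨v, hv, by simpa [scalar_apply] using hav⟩

end General

section Fin3

theorem apply_one_ne_zero_or_apply_two_ne_zero {M : Type*} [Zero M] {m : Fin 3 → M}
    (hm0 : m 0 = 0) (hm : m ≠ 0) : m 1 ≠ 0 ∨ m 2 ≠ 0 := by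
  by_contra! h
  exact hm (funext fun i => by fin_cases i <;> simp [hm0, h.1, h.2])

variable {K : Type*} [Field K]

theorem exists_isUnit_det_mulVec_single_eq {v : Fin 3 → K} (hv : v ≠ 0) :
    ∃ P : Matrix (Fin 3) (Fin 3) K, IsUnit P.det ∧ P *ᵥ Pi.single 0 1 = v := by
  obtain ⟨k, hk⟩ := Function.ne_iff.mp hv
  fin_cases k
  · refine ⟨!![v 0, 0, 0; v 1, 1, 0; v 2, 0, 1], by simpa [det_fin_three] using hk, ?_⟩
    ext i; fin_cases i <;> simp
  · refine ⟨!![v 0, 1, 0; v 1, 0, 0; v 2, 0, 1], by simpa [det_fin_three] using hk, ?_⟩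
    ext i; fin_cases i <;> simp
  · refine ⟨!![v 0, 1, 0; v 1, 0, 1; v 2, 0, 0], by simpa [det_fin_three] using hk, ?_⟩
    ext i; fin_cases i <;> simp

theorem exists_isUnit_det_mul_eq_transvection_mul {m : Fin 3 → K} (hm0 : m 0 = 0) (hm : m ≠ 0) :
    ∃ G : Matrix (Fin 3) (Fin 3) K, IsUnit G.det ∧
      G * (1 + vecMulVec (Pi.single 0 1) m) = Matrix.transvection 0 1 1 * G := by
  rcases apply_one_ne_zero_or_apply_two_ne_zero hm0 hm with h1 | h2
  · refine ⟨!![1, 0, 0; 0, m 1, m 2; 0, 0, 1], by simpa [det_fin_three] using h1, ?_⟩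
    ext i j
    fin_cases i <;> fin_cases j <;>
      simp [Matrix.transvection, vecMulVec_apply, Matrix.mul_apply, Fin.sum_univ_three, hm0]
  · refine ⟨!![1, 0, 0; 0, m 1, m 2; 0, 1, 0], by simpa [det_fin_three] using h2, ?_⟩
    ext i j
    fin_cases i <;> fin_cases j <;>
      simp [Matrix.transvection, vecMulVec_apply, Matrix.mul_apply, Fin.sum_univ_three, hm0]

theorem exists_mul_eq_mul_add_vecMulVec {σ : Matrix (Fin 3) (Fin 3) K} {a : K}
    (hcol : σ *ᵥ Pi.single 0 1 = a • Pi.single 0 1) (hσ : σ ≠ a • 1) :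
    ∃ (g : Matrix (Fin 3) (Fin 3) K) (w : Fin 3 → K), IsUnit g.det ∧ w 0 = 0 ∧ w ≠ 0 ∧
      σ * g = g * (σ + vecMulVec (Pi.single 0 1) w) := by
  have hcol' (p : Fin 3) : σ p 0 = if p = 0 then a else 0 := by
    simpa [Pi.single_apply] using congrFun hcol p
  have hdet (i j : Fin 3) (hij : i ≠ j) : IsUnit (Matrix.transvection i j (1 : K)).det := by
    simp [Matrix.det_transvection_of_ne i j hij]
  by_cases h1 : σ 1 = a • Pi.single 1 1
  · by_cases h2 : σ 2 = a • Pi.single 2 1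
    · set r := σ 0 - a • Pi.single 0 1
      have hσr : σ = a • 1 + vecMulVec (Pi.single 0 1) r := by
        ext p q
        fin_cases p
        · fin_cases q <;> simp [r, vecMulVec_apply]
        · simpa [vecMulVec_apply, Matrix.one_apply, Pi.single_apply, eq_comm] using
            congrFun h1 q
        · simpa [vecMulVec_apply, Matrix.one_apply, Pi.single_apply, eq_comm] using
            congrFun h2 q
      have hr : r ≠ 0 := fun h => hσ (by rw [hσr, h, vecMulVec_zero, add_zero])
      rcases apply_one_ne_zero_or_apply_two_ne_zero (by simp [r, hcol']) hr with hr1 | hr2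
      · exact ⟨_, r 1 • Pi.single 2 1, hdet 1 2 (by decide), by simp, by simpa using hr1,
          mul_transvection_eq_of_eq_smul_one_add (by decide) hσr⟩
      · exact ⟨_, r 2 • Pi.single 1 1, hdet 2 1 (by decide), by simp, by simpa using hr2,
          mul_transvection_eq_of_eq_smul_one_add (by decide) hσr⟩
    · exact ⟨_, _, hdet 0 2 (by decide), by simp [hcol'], sub_ne_zero.2 (Ne.symm h2),
        mul_transvection_eq_of_mulVec_single_eq (by decide) hcol⟩
  · exact ⟨_, _, hdet 0 1 (by decide), by simp [hcol'], sub_ne_zero.2 (Ne.symm h1),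
      mul_transvection_eq_of_mulVec_single_eq (by decide) hcol⟩

theorem isConjMulConj_inv_of_isRoot_charpoly {σ : Matrix (Fin 3) (Fin 3) K}
    (hσ : IsUnit σ.det) (hnc : ∀ a : K, σ ≠ a • 1) {a : K} (ha : σ.charpoly.IsRoot a) :
    IsConjMulConj (Matrix.transvection 0 1 1) σ⁻¹ σ := by
  obtain ⟨v, hv, hσv⟩ := exists_mulVec_eq_smul_of_isRoot_charpoly ha
  have ha0 : a ≠ 0 := by
    rintro rfl
    exact hσ.ne_zero (exists_mulVec_eq_zero_iff.1 ⟨v, hv, by simpa using hσv⟩)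
  obtain ⟨P, hP, hPv⟩ := exists_isUnit_det_mulVec_single_eq hv
  set σ₁ := P⁻¹ * σ * P with hσ₁
  have hσ₁det : IsUnit σ₁.det := by
    simpa [σ₁, det_mul, mul_comm] using hP.mul ((isUnit_nonsing_inv_det P hP).mul hσ)
  have hcol : σ₁ *ᵥ Pi.single 0 1 = a • Pi.single 0 1 := by
    rw [hσ₁, ← mulVec_mulVec, ← mulVec_mulVec, hPv, hσv, mulVec_smul, ← hPv, mulVec_mulVec,
      nonsing_inv_mul P hP, one_mulVec]
  have hnc₁ : σ₁ ≠ a • 1 := fun h => hnc a <| by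
    calc σ = P * σ₁ * P⁻¹ := by
          simp only [σ₁, Matrix.mul_assoc, mul_nonsing_inv_cancel_left _ _ hP,
            mul_nonsing_inv P hP, Matrix.mul_one]
      _ = a • 1 := by
          rw [h, Matrix.mul_smul, Matrix.mul_one, Matrix.smul_mul, mul_nonsing_inv P hP]
  obtain ⟨g, w, hg, hw0, hw, hgw⟩ := exists_mul_eq_mul_add_vecMulVec hcol hnc₁
  obtain ⟨G, hG, hGu⟩ := exists_isUnit_det_mul_eq_transvection_mul (m := a⁻¹ • w)
    (by simp [hw0]) (smul_ne_zero (inv_ne_zero ha0) hw)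
  have hu : σ₁ * (1 + vecMulVec (Pi.single 0 1) (a⁻¹ • w)) = σ₁ + vecMulVec (Pi.single 0 1) w := by
    rw [Matrix.mul_add, Matrix.mul_one, mul_vecMulVec, hcol, smul_vecMulVec, vecMulVec_smul,
      smul_smul, mul_inv_cancel₀ ha0, one_smul]
  refine IsConjMulConj.of_conj hP hP ?_
  rw [← inv_conj_of_isUnit_det hP, ← hσ₁]
  exact (isConjMulConj_inv_of_semiconj hσ₁det hg (hgw.trans (by rw [hu]))).of_semiconj hG hGu

variable {R : Type*} [CommRing R]

theorem entries_eq_zero_of_trace_transvection_mul_eq {C : Matrix (Fin 3) (Fin 3) R}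
    (htr : (Matrix.transvection 0 1 1 * C).trace = C.trace)
    (hadj : (Matrix.transvection 0 1 1 * C).adjugate.trace = C.adjugate.trace) :
    C 1 0 = 0 ∧ C 1 2 * C 2 0 = 0 := by
  have h10 : C 1 0 = 0 := by
    simpa [Matrix.transvection, Matrix.add_mul, trace_single_mul] using htr
  refine ⟨h10, ?_⟩
  rw [adjugate_mul_distrib, adjugate_transvection (by decide), Matrix.transvection,
    Matrix.mul_add, Matrix.mul_one, trace_add, trace_mul_single] at hadj
  simpa [adjugate_fin_three, h10] using hadj

theorem exists_isRoot_charpoly_of_entries_eq_zero [IsDomain R] {C : Matrix (Fin 3) (Fin 3) R}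
    (h10 : C 1 0 = 0) (h : C 1 2 * C 2 0 = 0) : ∃ a, C.charpoly.IsRoot a := by
  rcases mul_eq_zero.1 h with h12 | h20
  · exact ⟨C 1 1, by simp [Polynomial.IsRoot, eval_charpoly, det_fin_three, h10, h12]⟩
  · exact ⟨C 0 0, by simp [Polynomial.IsRoot, eval_charpoly, det_fin_three, h10, h20]⟩

theorem exists_isRoot_charpoly_of_isConjMulConj [IsDomain R] {σ : Matrix (Fin 3) (Fin 3) R}
    (hσ : IsUnit σ.det) (h : IsConjMulConj (Matrix.transvection 0 1 1) σ σ⁻¹) :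
    ∃ a, σ.charpoly.IsRoot a := by
  obtain ⟨ρ, τ, hρ, hτ, hT⟩ := h
  have hTC : Matrix.transvection 0 1 1 * (τ⁻¹ * σ * τ) = ρ⁻¹ * σ * ρ := by
    rw [hT]
    simp only [Matrix.mul_assoc, mul_nonsing_inv_cancel_left _ _ hτ,
      nonsing_inv_mul_cancel_left _ _ hσ, nonsing_inv_mul _ hτ, Matrix.mul_one]
  obtain ⟨h10, h⟩ := entries_eq_zero_of_trace_transvection_mul_eq
    (by rw [hTC, trace_conj_of_isUnit_det hρ, trace_conj_of_isUnit_det hτ])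
    (by rw [hTC, trace_adjugate_conj_of_isUnit_det hρ, trace_adjugate_conj_of_isUnit_det hτ])
  obtain ⟨a, ha⟩ := exists_isRoot_charpoly_of_entries_eq_zero h10 h
  exact ⟨a, by rwa [charpoly_conj_of_isUnit_det hτ] at ha⟩

end Fin3

theorem stmt10 {K : Type*} [Field K]
    (σ : Matrix (Fin 3) (Fin 3) K) (hσ : IsUnit σ.det)
    (hnoncentral : ∀ a : K, σ ≠ a • (1 : Matrix (Fin 3) (Fin 3) K)) :
    ((∃ a : K, σ.charpoly.IsRoot a) ↔
      (∃ ρ τ : Matrix (Fin 3) (Fin 3) K, IsUnit ρ.det ∧ IsUnit τ.det ∧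
        Matrix.transvection (0 : Fin 3) (1 : Fin 3) (1 : K)
          = (ρ⁻¹ * σ * ρ) * (τ⁻¹ * σ⁻¹ * τ))) ∧
    ((∃ a : K, σ.charpoly.IsRoot a) ↔
      (∃ ρ τ : Matrix (Fin 3) (Fin 3) K, IsUnit ρ.det ∧ IsUnit τ.det ∧
        Matrix.transvection (0 : Fin 3) (1 : Fin 3) (1 : K)
          = (ρ⁻¹ * σ⁻¹ * ρ) * (τ⁻¹ * σ * τ))) := by
  have hσinv : IsUnit σ⁻¹.det := isUnit_nonsing_inv_det σ hσ
  have hroot_iff : (∃ a : K, σ.charpoly.IsRoot a) ↔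
      IsConjMulConj (Matrix.transvection 0 1 1) σ⁻¹ σ :=
    ⟨fun ⟨_, ha⟩ => isConjMulConj_inv_of_isRoot_charpoly hσ hnoncentral ha,
      fun h => exists_isRoot_charpoly_of_isConjMulConj hσ (h.swap hσinv)⟩
  exact ⟨hroot_iff.trans ⟨IsConjMulConj.swap hσinv, IsConjMulConj.swap hσ⟩, hroot_iff⟩
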